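/- Let G be a finite group and H a subgroup that is a perfect code of G (i.e., H admits an inverse-closed right transversal in G). Let x ∈ G \ H with HxH = Hx⁻¹H and |H|/|H ∩ H^x| odd. Then for every integer b with 0 ≤ b ≤ |H|, there exist b pairwise disjoint right transversals of H in HxH whose union is inverse-closed. -/

import Mathlib

open scoped Pointwise

/-- T is a right transversal of H in A: T ⊆ A and T meets the right coset of
each element of A exactly once. -/
def IsRightTransversalOn {G : Type*} [Group G] (H : Subgroup G) (T A : Set G) : Prop :=
  T ⊆ A ∧ ∀ g ∈ A, ∃! t, t ∈ T ∧ t * g⁻¹ ∈ H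

/-- H is a perfect code of G: it admits an inverse-closed right transversal in G. -/
def IsPerfectCode {G : Type*} [Group G] (H : Subgroup G) : Prop :=
  ∃ T : Set G, (∀ g : G, ∃! t, t ∈ T ∧ t * g⁻¹ ∈ H) ∧ T⁻¹ = T

/-!
Let `D = HxH`; it is inverse-closed because `HxH = Hx⁻¹H`. Intersecting an inverse-closed right
transversal of `H` with `D` gives an inverse-closed set `T` of representatives of the `k` right
cosets in `D`. Every block `Hu ∩ (Hv)⁻¹` with `u, v ∈ D` is a two-sided translate of `xH ∩ Hx`,
so it has `κ = |H ∩ H^x|` elements, and cutting `x⁻¹H` into such blocks gives `|H| = kκ`. Hence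
`k` is odd and `T` contains an involution `y`. Index `T` by `ZMod k`, with `y` at `0`, and choose
in the block of `(i, j)` a subset of size `f (i + j)`, inverse to the one chosen for `(j, i)`,
where `∑ f = b`; the blocks on the diagonal are handled because `i + i ≠ 0` for `i ≠ 0` and the
block of `0` contains `y`. The union `S` is inverse-closed and meets every coset in `D` in `b`
points, and numbering these points splits `S` into `b` disjoint transversals.
-/

open MulOpposite
open scoped Function

namespace Set

variable {α : Type*} [InvolutiveInv α]

lemma inv_pair (a : α) : ({a, a⁻¹} : Set α)⁻¹ = {a, a⁻¹} := by
  rw [inv_insert, inv_singleton, inv_inv, pair_comm]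

lemma exists_mem_inv_eq_self_of_odd_ncard {A : Set α} (hA : A.Finite) (hAinv : A⁻¹ = A)
    (hodd : Odd A.ncard) : ∃ a ∈ A, a⁻¹ = a := by
  have := hA.fintype
  have hinv : ∀ a ∈ A, a⁻¹ ∈ A := fun a ha => by rw [← hAinv]; simpa using ha
  let f : A → A := fun a => ⟨a.1⁻¹, hinv a a.2⟩
  have hf : Function.Involutive f := fun a => Subtype.ext (inv_inv a.1)
  have hsq : hf.toPerm ^ 2 ^ 1 = 1 := by rw [pow_one, sq]; exact Equiv.ext hf
  have h2 : ¬ 2 ∣ Fintype.card A := by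
    rwa [← Nat.card_eq_fintype_card, Nat.card_coe_set_eq, ← even_iff_two_dvd,
      Nat.not_even_iff_odd]
  obtain ⟨a, ha⟩ := Equiv.Perm.exists_fixed_point_of_prime h2 hsq
  exact ⟨a, a.2, congrArg Subtype.val ha⟩

lemma exists_subset_inv_eq_self_ncard_eq {A : Set α} (hA : A.Finite) (hAinv : A⁻¹ = A)
    {a : α} (ha : a ∈ A) (haa : a⁻¹ = a) {m : ℕ} (hm : m ≤ A.ncard) :
    ∃ B ⊆ A, B⁻¹ = B ∧ B.ncard = m := by
  induction m using Nat.strong_induction_on generalizing A with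
  | _ m ih =>
  rcases m with _ | _ | m
  · exact ⟨∅, empty_subset A, inv_empty, ncard_empty α⟩
  · exact ⟨{a}, singleton_subset_iff.mpr ha, by rw [inv_singleton, haa], ncard_singleton a⟩
  -- peel off an orbit `{u, u⁻¹}` that avoids the fixed point `a`, and recurse
  obtain ⟨u, hu, hua⟩ := exists_ne_of_one_lt_ncard (s := A) (by omega) a
  set O : Set α := {u, u⁻¹}
  have hOA : O ⊆ A :=
    insert_subset hu (singleton_subset_iff.mpr (by rw [← hAinv]; simpa using hu))
  have haO : a ∉ O := by
    rintro (rfl | h)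
    · exact hua rfl
    · exact hua (by rw [← inv_inv u, ← h, haa])
  have hO1 : 1 ≤ O.ncard := (ncard_pos (toFinite O)).mpr (insert_nonempty u _)
  have hO2 : O.ncard ≤ 2 := (ncard_insert_le u _).trans (by rw [ncard_singleton])
  have hAO : (A \ O).ncard = A.ncard - O.ncard := ncard_sdiff hOA (toFinite O)
  have hAOinv : (A \ O)⁻¹ = A \ O := by
    change Inv.inv ⁻¹' (A \ O) = _
    rw [preimage_sdiff]; exact congrArg₂ _ hAinv (inv_pair u)
  obtain ⟨B, hBA, hBinv, hBcard⟩ :=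
    ih (m + 2 - O.ncard) (by omega) hA.sdiff hAOinv ⟨ha, haO⟩ (by omega)
  refine ⟨B ∪ O, union_subset (hBA.trans sdiff_subset) hOA,
    by rw [union_inv, hBinv, inv_pair], ?_⟩
  rw [ncard_union_eq (disjoint_sdiff_left.mono_left hBA) (hA.subset (hBA.trans sdiff_subset))]
  omega

end Set

lemma exists_symmetric_subfamily {ι α : Type*} [InvolutiveInv α] (B : ι → ι → Set α)
    (hB : ∀ i j, (B i j)⁻¹ = B j i) (c : ι → ι → ℕ) (hc : ∀ i j, c i j = c j i)
    (hcB : ∀ i j, c i j ≤ (B i j).ncard)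
    (hdiag : ∀ i, ∃ A ⊆ B i i, A⁻¹ = A ∧ A.ncard = c i i) :
    ∃ F : ι → ι → Set α,
      ∀ i j, F i j ⊆ B i j ∧ (F i j)⁻¹ = F j i ∧ (F i j).ncard = c i j := by
  classical
  let _ : LinearOrder ι := linearOrderOfSTO WellOrderingRel
  choose A hAB hAcard using fun i j => Set.exists_subset_card_eq (hcB i j)
  choose Δ hΔB hΔinv hΔcard using hdiag
  let F : ι → ι → Set α := fun i j =>
    if i = j then Δ i else if i < j then A i j else (A j i)⁻¹
  refine ⟨F, fun i j => ?_⟩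
  rcases lt_trichotomy i j with h | rfl | h
  · simp only [F, if_neg h.ne, if_pos h, if_neg h.ne', if_neg h.not_gt]
    exact ⟨hAB i j, trivial, hAcard i j⟩
  · simp only [F, if_pos rfl]
    exact ⟨hΔB i, hΔinv i, hΔcard i⟩
  · simp only [F, if_neg h.ne', if_pos h, if_neg h.ne, if_neg h.not_gt, inv_inv, Set.ncard_inv]
    refine ⟨?_, trivial, by rw [hAcard, hc]⟩
    rw [← hB j i]; exact Set.inv_subset_inv.mpr (hAB j i)

lemma Nat.exists_eq_add_mul_of_le_succ_mul {b κ : ℕ} : ∀ {n : ℕ}, b ≤ (n + 1) * κ →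
    ∃ q ≤ n, ∃ r ≤ κ, b = r + q * κ
  | 0, hb => ⟨0, le_rfl, b, by simpa using hb, by simp⟩
  | n + 1, hb => by
    by_cases hbn : b ≤ (n + 1) * κ
    · obtain ⟨q, hq, r, hr, rfl⟩ := exists_eq_add_mul_of_le_succ_mul hbn
      exact ⟨q, hq.trans n.le_succ, r, hr, rfl⟩
    · have : (n + 1 + 1) * κ = (n + 1) * κ + κ := by ring
      exact ⟨n + 1, le_rfl, b - (n + 1) * κ, by omega, by omega⟩

/-- The values off `i₀` are `0` or `κ`: on the diagonal they are realised by the empty or the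
whole block. -/
lemma exists_sum_eq_of_le_card_mul {ι : Type*} [Fintype ι] (i₀ : ι) {κ b : ℕ}
    (hb : b ≤ Fintype.card ι * κ) :
    ∃ f : ι → ℕ, f i₀ ≤ κ ∧ (∀ i ≠ i₀, f i = 0 ∨ f i = κ) ∧ ∑ i, f i = b := by
  classical
  have hcard : (Finset.univ.erase i₀).card + 1 = Fintype.card ι :=
    Finset.card_erase_add_one (Finset.mem_univ i₀)
  obtain ⟨q, hq, r, hr, rfl⟩ := Nat.exists_eq_add_mul_of_le_succ_mul (hcard ▸ hb)
  obtain ⟨Q, hQ, hQcard⟩ := Finset.exists_subset_card_eq hq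
  have hi₀Q : i₀ ∉ Q := fun h => by simpa using hQ h
  refine ⟨fun i => (Pi.single i₀ r : ι → ℕ) i + if i ∈ Q then κ else 0, ?_,
    fun i hi => ?_, ?_⟩
  · simp [hi₀Q, hr]
  · simp only [Pi.single_apply, if_neg hi, zero_add]
    split_ifs <;> simp
  · rw [Finset.sum_add_distrib, Finset.sum_pi_single', Finset.sum_ite_mem, Finset.univ_inter,
      Finset.sum_const, hQcard, smul_eq_mul, if_pos (Finset.mem_univ _)]

lemma ZMod.eq_zero_of_add_self_eq_zero {k : ℕ} (hk : Odd k) {a : ZMod k} (h : a + a = 0) :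
    a = 0 := by
  have h2 : IsUnit (2 : ZMod k) := by
    exact_mod_cast (ZMod.isUnit_iff_coprime 2 k).mpr (Nat.coprime_two_left.mpr hk)
  rwa [← two_mul, h2.mul_right_eq_zero] at h

lemma Set.iUnion_iUnion_inter_eq {ι α : Type*} {P : ι → Set α}
    (hP : Pairwise (Disjoint on P)) {F : ι → ι → Set α} (hF : ∀ i j, F i j ⊆ P i) (i : ι) :
    (⋃ i', ⋃ j, F i' j) ∩ P i = ⋃ j, F i j := by
  refine Set.Subset.antisymm ?_
    (Set.subset_inter
      (Set.iUnion_subset fun j => Set.subset_iUnion₂ (s := fun i j => F i j) i j)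
      (Set.iUnion_subset fun j => hF i j))
  rintro w ⟨hw, hwi⟩
  obtain ⟨i', j, hw⟩ := Set.mem_iUnion₂.mp hw
  obtain rfl : i' = i := by
    by_contra h
    exact Set.disjoint_left.mp (hP h) (hF i' j hw) hwi
  exact Set.mem_iUnion.mpr ⟨j, hw⟩

lemma Set.Finite.exists_equiv_zmod {α : Type*} {s : Set α} (hs : s.Finite) [NeZero s.ncard]
    {y : α} (hy : y ∈ s) : ∃ e : ZMod s.ncard ≃ s, e 0 = ⟨y, hy⟩ := by
  have := hs.fintype
  let e₀ : ZMod s.ncard ≃ s := Fintype.equivOfCardEq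
    (by rw [ZMod.card, ← Nat.card_eq_fintype_card, Nat.card_coe_set_eq])
  exact ⟨(Equiv.addRight (e₀.symm ⟨y, hy⟩)).trans e₀, by simp⟩

section Cosets

variable {G : Type*} [Group G] {H : Subgroup G}


lemma rightCoset_eq_of_mem {g w : G} (hw : w ∈ op g • (H : Set G)) :
    op w • (H : Set G) = op g • H :=
  (rightCoset_eq_iff H).mpr (by simpa using H.inv_mem ((mem_rightCoset_iff g).mp hw))

lemma inv_rightCoset (g : G) : (op g • (H : Set G))⁻¹ = g⁻¹ • (H : Set G) := by
  ext w
  rw [Set.mem_inv, mem_rightCoset_iff, mem_leftCoset_iff, inv_inv, ← mul_inv_rev,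
    SetLike.mem_coe, SetLike.mem_coe, inv_mem_iff]

section DoubleCosets

variable {x : G}

lemma mul_mem_doubleCoset {a g b : G} (ha : a ∈ H) (hg : g ∈ (H : Set G) * {x} * H)
    (hb : b ∈ H) : a * g * b ∈ (H : Set G) * {x} * H := by
  obtain ⟨c, hc, d, hd, rfl⟩ := DoubleCoset.mem_doubleCoset.mp hg
  exact DoubleCoset.mem_doubleCoset.mpr
    ⟨a * c, H.mul_mem ha hc, d * b, H.mul_mem hd hb, by simp only [mul_assoc]⟩

lemma rightCoset_subset_doubleCoset {g : G} (hg : g ∈ (H : Set G) * {x} * H) :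
    op g • (H : Set G) ⊆ (H : Set G) * {x} * H := fun w hw => by
  simpa using mul_mem_doubleCoset ((mem_rightCoset_iff g).mp hw) hg H.one_mem

lemma leftCoset_subset_doubleCoset {g : G} (hg : g ∈ (H : Set G) * {x} * H) :
    g • (H : Set G) ⊆ (H : Set G) * {x} * H := fun w hw => by
  simpa using mul_mem_doubleCoset H.one_mem hg ((mem_leftCoset_iff g).mp hw)

lemma inv_doubleCoset : ((H : Set G) * {x} * H)⁻¹ = (H : Set G) * {x⁻¹} * H := by
  rw [mul_inv_rev, mul_inv_rev, inv_coe_set, Set.inv_singleton, mul_assoc]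

lemma inv_mem_doubleCoset
    (heq : (H : Set G) * {x} * (H : Set G) = (H : Set G) * {x⁻¹} * (H : Set G)) {g : G}
    (hg : g ∈ (H : Set G) * {x} * H) : g⁻¹ ∈ (H : Set G) * {x} * H := by
  rw [heq, ← inv_doubleCoset]
  exact Set.inv_mem_inv.mpr hg

lemma ncard_inter_conj_eq :
    ((H : Set G) ∩ (fun g => x⁻¹ * g * x) '' H).ncard
      = (x • (H : Set G) ∩ op x • H).ncard := by
  have hconj : (fun g => x⁻¹ * g * x) '' (H : Set G) = x⁻¹ • op x • (H : Set G) := by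
    rw [← Set.image_smul, ← Set.image_smul, Set.image_image]
    simp only [smul_eq_mul, op_smul_eq_mul, mul_assoc]
  rw [hconj, ← Set.ncard_smul_set x, Set.smul_set_inter, smul_inv_smul]

lemma ncard_rightCoset_inter_leftCoset {u v : G} (hu : u ∈ (H : Set G) * {x} * H)
    (hv : v ∈ (H : Set G) * {x} * H) :
    (op u • (H : Set G) ∩ v • (H : Set G)).ncard
      = ((H : Set G) ∩ (fun g => x⁻¹ * g * x) '' H).ncard := by
  obtain ⟨a, ha, b, hb, rfl⟩ := DoubleCoset.mem_doubleCoset.mp hu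
  obtain ⟨c, hc, d, hd, rfl⟩ := DoubleCoset.mem_doubleCoset.mp hv
  have hHu : op (a * x * b) • (H : Set G) = op b • op x • (H : Set G) := by
    rw [← rightCoset_assoc, ← rightCoset_assoc, rightCoset_mem_rightCoset H ha]
  have hvH : (c * x * d) • (H : Set G) = c • x • (H : Set G) := by
    rw [← smul_smul, ← smul_smul, leftCoset_mem_leftCoset H hd]
  have htrans : op b • op x • (H : Set G) ∩ c • x • (H : Set G)
      = c • op b • (x • (H : Set G) ∩ op x • H) := by
    rw [Set.smul_set_inter, Set.smul_set_inter, smul_comm (op b) x (H : Set G),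
      smul_comm c (op b), smul_comm c (op x), leftCoset_mem_leftCoset H hc,
      rightCoset_mem_rightCoset H hb, Set.inter_comm]
  rw [hHu, hvH, htrans, Set.ncard_smul_set, Set.ncard_smul_set, ncard_inter_conj_eq]

lemma ncard_rightCoset_inter_inv_rightCoset
    (heq : (H : Set G) * {x} * (H : Set G) = (H : Set G) * {x⁻¹} * (H : Set G)) {u v : G}
    (hu : u ∈ (H : Set G) * {x} * H) (hv : v ∈ (H : Set G) * {x} * H) :
    (op u • (H : Set G) ∩ (op v • (H : Set G))⁻¹).ncard
      = ((H : Set G) ∩ (fun g => x⁻¹ * g * x) '' H).ncard := by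
  rw [inv_rightCoset]
  exact ncard_rightCoset_inter_leftCoset hu (inv_mem_doubleCoset heq hv)

end DoubleCosets

lemma IsPerfectCode.exists_transversalOn_inv_eq_self (hpc : IsPerfectCode H) {D : Set G}
    (hD : ∀ g ∈ D, op g • (H : Set G) ⊆ D) (hDinv : D⁻¹ = D) :
    ∃ T, IsRightTransversalOn H T D ∧ T⁻¹ = T := by
  obtain ⟨T, hT, hTinv⟩ := hpc
  refine ⟨T ∩ D, ⟨Set.inter_subset_right, fun g hg => ?_⟩,
    by rw [Set.inter_inv, hTinv, hDinv]⟩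
  obtain ⟨t, ⟨htT, htg⟩, huniq⟩ := hT g
  exact ⟨t, ⟨⟨htT, hD g hg ((mem_rightCoset_iff g).mpr htg)⟩, htg⟩,
    fun t' ht' => huniq t' ⟨ht'.1.1, ht'.2⟩⟩

lemma IsRightTransversalOn.existsUnique_mem_rightCoset {T D : Set G}
    (hT : IsRightTransversalOn H T D) {ι : Type*} (e : ι ≃ T) :
    ∀ g ∈ D, ∃! i, g ∈ op (e i : G) • (H : Set G) := by
  have hmem : ∀ g t : G, g ∈ op t • (H : Set G) ↔ t * g⁻¹ ∈ H := fun g t => by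
    rw [mem_rightCoset_iff, SetLike.mem_coe, ← inv_mem_iff, mul_inv_rev, inv_inv]
  intro g hg
  obtain ⟨t, ⟨htT, htg⟩, huniq⟩ := hT.2 g hg
  refine ⟨e.symm ⟨t, htT⟩, by simpa [hmem] using htg, fun i hi => ?_⟩
  rw [Equiv.eq_symm_apply]
  exact Subtype.ext (huniq _ ⟨(e i).2, (hmem _ _).mp hi⟩)

section IndexedTransversal

variable {ι : Type*} {D : Set G} {τ : ι → G}

lemma pairwise_disjoint_rightCoset (hτD : ∀ i, τ i ∈ D)
    (hτ : ∀ g ∈ D, ∃! i, g ∈ op (τ i) • (H : Set G)) :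
    Pairwise (Disjoint on fun i => op (τ i) • (H : Set G)) := fun i j hij =>
  Set.disjoint_left.mpr fun w hwi hwj => hij <| (hτ (τ i) (hτD i)).unique
    (mem_own_rightCoset H.toSubmonoid (τ i))
    (by rw [← (rightCoset_eq_of_mem hwi).symm.trans (rightCoset_eq_of_mem hwj)]
        exact mem_own_rightCoset H.toSubmonoid (τ i))

lemma ncard_eq_sum_ncard_inter_rightCoset [Finite G] [Fintype ι] (hτD : ∀ i, τ i ∈ D)
    (hτ : ∀ g ∈ D, ∃! i, g ∈ op (τ i) • (H : Set G)) {A : Set G} (hA : A ⊆ D) :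
    A.ncard = ∑ i, (A ∩ op (τ i) • (H : Set G)).ncard := by
  have hcover : A = ⋃ i, A ∩ op (τ i) • (H : Set G) := by
    rw [← Set.inter_iUnion, eq_comm, Set.inter_eq_left]
    exact fun a ha => Set.mem_iUnion.mpr (hτ a (hA ha)).exists
  conv_lhs => rw [hcover]
  rw [Set.ncard_iUnion_of_finite (fun _ => Set.toFinite _)
    fun i j hij => ((pairwise_disjoint_rightCoset hτD hτ hij).mono
      Set.inter_subset_right Set.inter_subset_right), finsum_eq_sum_of_fintype]

end IndexedTransversal

lemma card_eq_ncard_mul_of_transversalOn [Finite G] {x : G}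
    (heq : (H : Set G) * {x} * (H : Set G) = (H : Set G) * {x⁻¹} * (H : Set G)) {T : Set G}
    (hT : IsRightTransversalOn H T ((H : Set G) * {x} * (H : Set G))) :
    Nat.card H = T.ncard * ((H : Set G) ∩ (fun g => x⁻¹ * g * x) '' (H : Set G)).ncard := by
  have hxinv : x⁻¹ ∈ (H : Set G) * {x} * (H : Set G) :=
    inv_mem_doubleCoset heq (DoubleCoset.mem_doubleCoset_self H H x)
  have := (Set.toFinite T).fintype
  calc Nat.card H = (x⁻¹ • (H : Set G)).ncard := by
        rw [Set.ncard_smul_set, ← Nat.card_coe_set_eq, SetLike.coe_sort_coe]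
    _ = ∑ t : T, (x⁻¹ • (H : Set G) ∩ op (t : G) • (H : Set G)).ncard :=
        ncard_eq_sum_ncard_inter_rightCoset (fun t => hT.1 t.2)
          (hT.existsUnique_mem_rightCoset (Equiv.refl T)) (leftCoset_subset_doubleCoset hxinv)
    _ = T.ncard * ((H : Set G) ∩ (fun g => x⁻¹ * g * x) '' (H : Set G)).ncard := by
        simp_rw [Set.inter_comm (x⁻¹ • (H : Set G)),
          ncard_rightCoset_inter_leftCoset (hT.1 (Subtype.property _)) hxinv]
        rw [Finset.sum_const, Finset.card_univ, smul_eq_mul, ← Nat.card_eq_fintype_card,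
          Nat.card_coe_set_eq]

lemma exists_inv_eq_self_ncard_inter_rightCoset_eq [Finite G] {k : ℕ} [NeZero k]
    (hk : Odd k) {D : Set G} {τ : ZMod k → G} (hτD : ∀ i, op (τ i) • (H : Set G) ⊆ D)
    (hτ : ∀ g ∈ D, ∃! i, g ∈ op (τ i) • (H : Set G)) (hτ₀ : (τ 0)⁻¹ = τ 0) {κ : ℕ}
    (hblock : ∀ i j, (op (τ i) • (H : Set G) ∩ (op (τ j) • (H : Set G))⁻¹).ncard = κ)
    {b : ℕ} (hb : b ≤ k * κ) :
    ∃ S ⊆ D, S⁻¹ = S ∧ ∀ g ∈ D, (S ∩ op g • (H : Set G)).ncard = b := by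
  set P : ZMod k → Set G := fun i => op (τ i) • (H : Set G)
  have hP : Pairwise (Disjoint on P) :=
    pairwise_disjoint_rightCoset (fun i => hτD i (mem_own_rightCoset H.toSubmonoid (τ i))) hτ
  have hBinv : ∀ i j, (P i ∩ (P j)⁻¹)⁻¹ = P j ∩ (P i)⁻¹ := fun i j => by
    rw [Set.inter_inv, inv_inv, Set.inter_comm]
  obtain ⟨f, hf₀, hf, hfsum⟩ :=
    exists_sum_eq_of_le_card_mul (0 : ZMod k) (κ := κ) (b := b) (by rwa [ZMod.card])
  have hfκ : ∀ i, f i ≤ κ := fun i => by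
    by_cases hi : i = 0
    · exact hi ▸ hf₀
    · rcases hf i hi with h | h <;> omega
  have hdiag : ∀ i, ∃ A ⊆ P i ∩ (P i)⁻¹, A⁻¹ = A ∧ A.ncard = f (i + i) := by
    intro i
    by_cases hi : i = 0
    · subst hi
      have hτ₀P : τ 0 ∈ P 0 := mem_own_rightCoset H.toSubmonoid (τ 0)
      exact Set.exists_subset_inv_eq_self_ncard_eq (Set.toFinite _) (hBinv 0 0)
        ⟨hτ₀P, by rwa [Set.mem_inv, hτ₀]⟩ hτ₀ (by rw [hblock, add_zero]; exact hf₀)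
    · rcases hf (i + i) (fun h => hi (ZMod.eq_zero_of_add_self_eq_zero hk h)) with h | h
      · exact ⟨∅, Set.empty_subset _, Set.inv_empty, by rw [h, Set.ncard_empty]⟩
      · exact ⟨_, subset_rfl, hBinv i i, by rw [h, hblock]⟩
  obtain ⟨F, hF⟩ := exists_symmetric_subfamily (fun i j => P i ∩ (P j)⁻¹) hBinv
    (fun i j => f (i + j)) (fun i j => by rw [add_comm]) (fun i j => (hblock i j).symm ▸ hfκ _)
    hdiag
  refine ⟨⋃ i, ⋃ j, F i j, Set.iUnion₂_subset fun i j =>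
      (hF i j).1.trans (Set.inter_subset_left.trans (hτD i)), ?_, fun g hg => ?_⟩
  · simp_rw [Set.iUnion_inv, (hF _ _).2.1]
    exact Set.iUnion_comm _
  obtain ⟨i, hgi, -⟩ := hτ g hg
  have hrow : Pairwise (Disjoint on F i) := fun j j' hjj' =>
    ((hP hjj').preimage Inv.inv).mono ((hF i j).1.trans Set.inter_subset_right)
      ((hF i j').1.trans Set.inter_subset_right)
  rw [rightCoset_eq_of_mem hgi,
    Set.iUnion_iUnion_inter_eq hP (fun i j => (hF i j).1.trans Set.inter_subset_left) i,
    Set.ncard_iUnion_of_finite (fun _ => Set.toFinite _) hrow, finsum_eq_sum_of_fintype]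
  simp_rw [(hF i _).2.2]
  rw [← hfsum]
  exact Equiv.sum_comp (Equiv.addLeft i) f

lemma exists_disjoint_transversalOn_iUnion_eq [Finite G] {D S : Set G} (hSD : S ⊆ D) {b : ℕ}
    (hS : ∀ g ∈ D, (S ∩ op g • (H : Set G)).ncard = b) :
    ∃ T : Fin b → Set G,
      (∀ i, IsRightTransversalOn H (T i) D) ∧ Pairwise (Disjoint on T) ∧ ⋃ i, T i = S := by
  have henum : ∀ A : Set G, A.ncard = b →
      ∃ φ : Fin b → G, Function.Injective φ ∧ Set.range φ = A := fun A hA => by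
    let e := Finite.equivFinOfCardEq (by rwa [Nat.card_coe_set_eq] : Nat.card A = b)
    exact ⟨Subtype.val ∘ e.symm, Subtype.val_injective.comp e.symm.injective,
      by rw [Set.range_comp, e.symm.range_eq_univ, Set.image_univ, Subtype.range_coe]⟩
  choose! φ hφinj hφrange using henum
  -- the `i`-th layer takes the `i`-th element of `S` in each coset, for an enumeration of
  -- `S ∩ Hg` that depends only on the coset `Hg`
  set ψ : G → Fin b → G := fun g => φ (S ∩ op g • (H : Set G))
  have hψ : ∀ g ∈ D, ∀ i, ψ g i ∈ S ∩ op g • (H : Set G) := fun g hg i => by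
    rw [← hφrange _ (hS g hg)]; exact Set.mem_range_self i
  have hψ_eq : ∀ g g' w, w ∈ op g • (H : Set G) → w ∈ op g' • (H : Set G) → ψ g = ψ g' :=
    fun g g' w hg hg' => by
      simp only [ψ, ← rightCoset_eq_of_mem hg, ← rightCoset_eq_of_mem hg']
  refine ⟨fun i => (ψ · i) '' D, fun i => ⟨?_, fun g hg => ?_⟩, fun i j hij => ?_, ?_⟩
  · rintro _ ⟨g, hg, rfl⟩
    exact hSD (hψ g hg i).1
  · refine ⟨ψ g i, ⟨⟨g, hg, rfl⟩, (mem_rightCoset_iff g).mp (hψ g hg i).2⟩, ?_⟩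
    rintro _ ⟨⟨g', hg', rfl⟩, hg'g⟩
    exact congrFun (hψ_eq g' g _ (hψ g' hg' i).2 ((mem_rightCoset_iff g).mpr hg'g)) i
  · refine Set.disjoint_left.mpr ?_
    rintro _ ⟨g, hg, rfl⟩ ⟨g', hg', he⟩
    have he : ψ g' j = ψ g i := he
    have hgg' : ψ g' = ψ g := hψ_eq g' g _ (he ▸ (hψ g' hg' j).2) (hψ g hg i).2
    rw [hgg'] at he
    exact hij (hφinj _ (hS g hg) he.symm)
  · refine Set.Subset.antisymm (Set.iUnion_subset fun i => ?_) fun s hs => ?_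
    · rintro _ ⟨g, hg, rfl⟩
      exact (hψ g hg i).1
    · obtain ⟨i, hi⟩ : s ∈ Set.range (ψ s) := by
        rw [hφrange _ (hS s (hSD hs))]; exact ⟨hs, mem_own_rightCoset H.toSubmonoid s⟩
      exact Set.mem_iUnion.mpr ⟨i, s, hSD hs, hi⟩

end Cosets

theorem stmt8_general {G : Type*} [Group G] [Fintype G] (H : Subgroup G) (x : G)
    (hpc : IsPerfectCode H)
    (heq : (H : Set G) * {x} * (H : Set G) = (H : Set G) * {x⁻¹} * (H : Set G))
    (hodd : Odd (Nat.card H /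
      ((H : Set G) ∩ ((fun g => x⁻¹ * g * x) '' (H : Set G))).ncard)) :
    ∀ b : ℕ, b ≤ Nat.card H →
      ∃ T : Fin b → Set G,
        (∀ i, IsRightTransversalOn H (T i) ((H : Set G) * {x} * (H : Set G))) ∧
        (Pairwise fun i j => Disjoint (T i) (T j)) ∧
        (⋃ i, T i)⁻¹ = ⋃ i, T i := by
  intro b hb
  have hDinv : ((H : Set G) * {x} * (H : Set G))⁻¹ = (H : Set G) * {x} * (H : Set G) :=
    inv_doubleCoset.trans heq.symm
  obtain ⟨T, hT, hTinv⟩ :=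
    hpc.exists_transversalOn_inv_eq_self (fun _ => rightCoset_subset_doubleCoset) hDinv
  have hκ : 0 < ((H : Set G) ∩ (fun g => x⁻¹ * g * x) '' (H : Set G)).ncard :=
    (Set.ncard_pos (Set.toFinite _)).mpr ⟨1, H.one_mem, 1, H.one_mem, by simp⟩
  have hcard := card_eq_ncard_mul_of_transversalOn heq hT
  have hk : Odd T.ncard := by rwa [hcard, Nat.mul_div_cancel _ hκ] at hodd
  have : NeZero T.ncard := ⟨hk.pos.ne'⟩
  obtain ⟨y, hyT, hy⟩ := Set.exists_mem_inv_eq_self_of_odd_ncard (Set.toFinite T) hTinv hk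
  obtain ⟨e, he⟩ := (Set.toFinite T).exists_equiv_zmod hyT
  obtain ⟨S, hSD, hSinv, hS⟩ := exists_inv_eq_self_ncard_inter_rightCoset_eq hk
    (fun i => rightCoset_subset_doubleCoset (hT.1 (e i).2)) (hT.existsUnique_mem_rightCoset e)
    (by rw [he]; exact hy)
    (fun i j => ncard_rightCoset_inter_inv_rightCoset heq (hT.1 (e i).2) (hT.1 (e j).2))
    (hcard ▸ hb)
  obtain ⟨U, hU, hUdisj, hUS⟩ := exists_disjoint_transversalOn_iUnion_eq hSD hS
  exact ⟨U, hU, hUdisj, by rw [hUS, hSinv]⟩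

theorem stmt8 {G : Type*} [Group G] [Fintype G] (H : Subgroup G) (x : G)
    (hpc : IsPerfectCode H)
    (hx : x ∉ H)
    (heq : (H : Set G) * {x} * (H : Set G) = (H : Set G) * {x⁻¹} * (H : Set G))
    (hodd : Odd (Nat.card H /
      ((H : Set G) ∩ ((fun g => x⁻¹ * g * x) '' (H : Set G))).ncard)) :
    ∀ b : ℕ, b ≤ Nat.card H →
      ∃ T : Fin b → Set G,
        (∀ i, IsRightTransversalOn H (T i) ((H : Set G) * {x} * (H : Set G))) ∧
        (Pairwise fun i j => Disjoint (T i) (T j)) ∧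
        (⋃ i, T i)⁻¹ = ⋃ i, T i :=
  stmt8_general H x hpc heq hodd
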